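/- arXiv:1907.10906 — 4 statements merged into one kernel-verified Lean document; each statement's English description precedes it below -/
import Mathlib

section
/- Let d ≥ 1, let w ∈ ℝ^d be a nonzero vector, let a ~ N(0, (1/d)I_d) be a Gaussian random vector in ℝ^d, and set ā := a/‖a‖. Then for every τ > 0 and every t ∈ (0,1): Φ(√d·τ·(1+t)/‖w‖) − 2·P(‖a‖ > 1+t) ≤ P(|⟨w, ā⟩| ≥ τ) ≤ Φ(√d·τ·(1−t)/‖w‖) + 2·P(‖a‖ < 1−t). (Applied with w = U₂ᵀU₁ā_i, this bounds the cross-subspace conditional connection probability q_i in the semi-random UoS model: if aff² − t ≤ ‖w‖² ≤ aff² + t, then Φ(τ_d(1+t)/√(aff²−t)) − 2P(‖a‖>1+t) ≤ q_i ≤ Φ(τ_d(1−t)/√(aff²+t)) + 2P(‖a‖<1−t).) -/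
/-!
`⟪w, a⟫` is a sum of independent centered Gaussians, hence has law `N(0, ‖w‖² / d)`, so that
`P(|⟪w, a⟫| ≥ s) = Φ(√d s / ‖w‖)`. Since `|⟪w, ā⟫| = |⟪w, a⟫| / ‖a‖`, outside `{‖a‖ < 1 - t}` the
event `|⟪w, ā⟫| ≥ τ` forces `|⟪w, a⟫| ≥ τ (1 - t)`, and outside `{‖a‖ > 1 + t}` the event
`|⟪w, a⟫| ≥ τ (1 + t)` forces `|⟪w, ā⟫| ≥ τ`; a union bound gives both inequalities.
-/

open MeasureTheory ProbabilityTheory Real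
open scoped RealInnerProductSpace ENNReal NNReal

noncomputable def Phi (t : ℝ) : ℝ :=
  ∫ x in {x : ℝ | t < |x|}, (Real.sqrt (2 * Real.pi))⁻¹ * Real.exp (-x ^ 2 / 2)

namespace ProbabilityTheory

variable {Ω : Type*} [MeasurableSpace Ω] {μ : Measure Ω}

section NormalizedInner

variable {E : Type*} [NormedAddCommGroup E] [InnerProductSpace ℝ E]

lemma abs_inner_inv_norm_smul (w x : E) : |⟪w, ‖x‖⁻¹ • x⟫| = |⟪w, x⟫| / ‖x‖ := by
  rw [real_inner_smul_right, abs_mul, abs_inv, abs_norm, inv_mul_eq_div]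

lemma measureReal_abs_inner_normalize_ge_le [IsFiniteMeasure μ] (a : Ω → E) (w : E)
    {τ r : ℝ} (hτ : 0 ≤ τ) (hr : 0 < r) :
    μ.real {ω | τ ≤ |⟪w, ‖a ω‖⁻¹ • a ω⟫|}
      ≤ μ.real {ω | τ * r ≤ |⟪w, a ω⟫|} + μ.real {ω | ‖a ω‖ < r} := by
  refine (measureReal_mono fun ω (hω : τ ≤ _) => ?_).trans (measureReal_union_le _ _)
  rcases lt_or_ge ‖a ω‖ r with hlt | hge
  · exact Or.inr hlt
  · rw [abs_inner_inv_norm_smul, le_div_iff₀ (hr.trans_le hge)] at hω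
    exact Or.inl ((mul_le_mul_of_nonneg_left hge hτ).trans hω)

lemma measureReal_le_abs_inner_normalize_ge [IsFiniteMeasure μ] (a : Ω → E) (w : E)
    {τ R : ℝ} (hτ : 0 < τ) (hR : 0 < R) :
    μ.real {ω | τ * R ≤ |⟪w, a ω⟫|}
      ≤ μ.real {ω | τ ≤ |⟪w, ‖a ω‖⁻¹ • a ω⟫|} + μ.real {ω | R < ‖a ω‖} := by
  refine (measureReal_mono fun ω (hω : τ * R ≤ _) => ?_).trans (measureReal_union_le _ _)
  rcases lt_or_ge R ‖a ω‖ with hlt | hle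
  · exact Or.inr hlt
  · have ha : a ω ≠ 0 := by
      rintro h
      rw [h, inner_zero_right, abs_zero] at hω
      exact (mul_pos hτ hR).not_ge hω
    refine Or.inl ?_
    change τ ≤ _
    rw [abs_inner_inv_norm_smul, le_div_iff₀ (norm_pos_iff.mpr ha)]
    exact (mul_le_mul_of_nonneg_left hle hτ.le).trans hω

end NormalizedInner

section Gaussian

lemma Phi_eq_gaussianReal (r : ℝ) : Phi r = (gaussianReal 0 1).real {x | r < |x|} := by
  have hs : MeasurableSet {x : ℝ | r < |x|} := measurableSet_lt measurable_const measurable_abs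
  rw [measureReal_def, gaussianReal_apply_eq_integral 0 one_ne_zero,
    ENNReal.toReal_ofReal (setIntegral_nonneg hs fun x _ => gaussianPDFReal_nonneg _ _ _)]
  refine setIntegral_congr_fun hs fun x _ => ?_
  simp [gaussianPDFReal]

lemma gaussianReal_abs_ge_eq_abs_gt {v : ℝ≥0} (hv : v ≠ 0) (s : ℝ) :
    gaussianReal 0 v {x | s ≤ |x|} = gaussianReal 0 v {x | s < |x|} := by
  have hsplit : {x : ℝ | s ≤ |x|} = {x | s < |x|} ∪ {x | |x| = s} := by
    ext x
    simp [le_iff_lt_or_eq, eq_comm]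
  have hnull : gaussianReal 0 v {x : ℝ | |x| = s} = 0 := by
    refine gaussianReal_absolutelyContinuous 0 hv (measure_mono_null (t := {s, -s}) ?_ ?_)
    · intro x (hx : |x| = s)
      rcases abs_choice x with h | h <;> simp [← hx, h]
    · exact (Set.toFinite _).measure_zero _
  rw [hsplit, measure_congr (union_ae_eq_left_of_ae_eq_empty (ae_eq_empty.mpr hnull))]

lemma gaussianReal_real_abs_ge {v : ℝ≥0} (hv : v ≠ 0) (s : ℝ) :
    (gaussianReal 0 v).real {x | s ≤ |x|} = Phi (s / √v) := by
  have hsqrt : 0 < √(v : ℝ) := Real.sqrt_pos.mpr (NNReal.coe_pos.mpr (pos_iff_ne_zero.mpr hv))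
  have hmap : (gaussianReal 0 1).map (√(v : ℝ) * ·) = gaussianReal 0 v := by
    rw [gaussianReal_map_const_mul, mul_zero, mul_one]
    congr 1
    exact NNReal.eq (Real.sq_sqrt v.coe_nonneg)
  have hpre : (√(v : ℝ) * ·) ⁻¹' {x : ℝ | s < |x|} = {y | s / √v < |y|} := by
    ext y
    simp [abs_mul, abs_of_pos hsqrt, div_lt_iff₀ hsqrt, mul_comm]
  rw [measureReal_def, gaussianReal_abs_ge_eq_abs_gt hv, ← hmap, ← measureReal_def,
    map_measureReal_apply (measurable_const_mul _)
      (measurableSet_lt measurable_const measurable_abs), hpre, Phi_eq_gaussianReal]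

variable [IsProbabilityMeasure μ]

lemma map_finsetSum_eq_gaussianReal {ι : Type*} {X : ι → Ω → ℝ} (hX : ∀ i, Measurable (X i))
    (hind : iIndepFun X μ) {m : ι → ℝ} {v : ι → ℝ≥0}
    (hlaw : ∀ i, μ.map (X i) = gaussianReal (m i) (v i)) (s : Finset ι) :
    μ.map (∑ i ∈ s, X i) = gaussianReal (∑ i ∈ s, m i) (∑ i ∈ s, v i) := by
  classical
  induction s using Finset.induction_on with
  | empty =>
    rw [Finset.sum_empty, Finset.sum_empty, Finset.sum_empty, gaussianReal_zero_var, Pi.zero_def,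
      Measure.map_const, measure_univ, one_smul]
  | insert i s hi ih =>
    rw [Finset.sum_insert hi, Finset.sum_insert hi, Finset.sum_insert hi]
    exact gaussianReal_add_gaussianReal_of_indepFun
      (hind.indepFun_finsetSum_of_notMem hX hi).symm (hlaw i) ih

lemma map_inner_eq_gaussianReal {ι : Type*} [Fintype ι] {a : Ω → EuclideanSpace ℝ ι}
    (ha : Measurable a) (hind : iIndepFun (fun i ω => a ω i) μ) {v : ℝ≥0}
    (hlaw : ∀ i, μ.map (fun ω => a ω i) = gaussianReal 0 v) (w : EuclideanSpace ℝ ι) :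
    μ.map (fun ω => ⟪w, a ω⟫) = gaussianReal 0 (‖w‖₊ ^ 2 * v) := by
  have hcoord : ∀ i, Measurable fun ω => a ω i :=
    fun i => (measurable_pi_apply i).comp ((WithLp.measurable_ofLp _ _).comp ha)
  have hinner : (fun ω => ⟪w, a ω⟫) = ∑ i, fun ω => w i * a ω i := by
    ext ω
    simp [PiLp.inner_apply, mul_comm]
  have hvar : ‖w‖₊ ^ 2 * v = ∑ i, NNReal.mk (w i ^ 2) (sq_nonneg _) * v := by
    ext
    push_cast
    rw [EuclideanSpace.real_norm_sq_eq, Finset.sum_mul]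
  rw [hinner, hvar]
  have hlaw' : ∀ i, μ.map (fun ω => w i * a ω i)
      = gaussianReal 0 (NNReal.mk (w i ^ 2) (sq_nonneg _) * v) := fun i => by
    rw [← Function.comp_def (w i * ·), ← Measure.map_map (measurable_const_mul _) (hcoord i),
      hlaw i, gaussianReal_map_const_mul, mul_zero]
  have hsum := map_finsetSum_eq_gaussianReal (fun i => (hcoord i).const_mul (w i))
    (hind.comp (fun i x => w i * x) fun i => measurable_const_mul _) hlaw' Finset.univ
  rwa [Finset.sum_const_zero] at hsum

end Gaussian

end ProbabilityTheory

theorem statement_4_general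
    (d : ℕ)
    (Ω : Type) [MeasurableSpace Ω] (μ : Measure Ω) [IsProbabilityMeasure μ]
    (a : Ω → EuclideanSpace ℝ (Fin d))
    (ha_meas : Measurable a)
    (ha_indep : iIndepFun (fun j ω => a ω j) μ)
    (ha_gauss : ∀ j, μ.map (fun ω => a ω j) = gaussianReal 0 ((d : ℝ≥0)⁻¹))
    (w : EuclideanSpace ℝ (Fin d)) (hw : w ≠ 0)
    (τ : ℝ) (hτ : 0 < τ) (t : ℝ) (ht0 : 0 < t) (ht1 : t < 1) :
    Phi (Real.sqrt d * τ * (1 + t) / ‖w‖) - 2 * (μ {ω | 1 + t < ‖a ω‖}).toReal ≤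
        (μ {ω | τ ≤ |⟪w, ‖a ω‖⁻¹ • a ω⟫|}).toReal ∧
      (μ {ω | τ ≤ |⟪w, ‖a ω‖⁻¹ • a ω⟫|}).toReal ≤
        Phi (Real.sqrt d * τ * (1 - t) / ‖w‖) + 2 * (μ {ω | ‖a ω‖ < 1 - t}).toReal := by
  have hd : d ≠ 0 := by
    rintro rfl
    exact hw (Subsingleton.elim _ _)
  have hvar : ‖w‖₊ ^ 2 * (d : ℝ≥0)⁻¹ ≠ 0 := by simp [hw, hd]
  have htail (s : ℝ) : μ.real {ω | s ≤ |⟪w, a ω⟫|} = Phi (√d * s / ‖w‖) := by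
    change μ.real ((fun ω => ⟪w, a ω⟫) ⁻¹' {x | s ≤ |x|}) = _
    rw [← map_measureReal_apply (by fun_prop) (measurableSet_le measurable_const measurable_abs),
      map_inner_eq_gaussianReal ha_meas ha_indep ha_gauss, gaussianReal_real_abs_ge hvar]
    congr 1
    push_cast
    rw [Real.sqrt_mul (by positivity), Real.sqrt_sq (norm_nonneg _), Real.sqrt_inv]
    field_simp
  have hlower := measureReal_le_abs_inner_normalize_ge (μ := μ) a w hτ (by linarith : 0 < 1 + t)
  have hupper := measureReal_abs_inner_normalize_ge_le (μ := μ) a w hτ.le (by linarith : 0 < 1 - t)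
  rw [htail, ← mul_assoc] at hlower hupper
  simp only [← measureReal_def]
  constructor <;> linarith [measureReal_nonneg (μ := μ) (s := {ω | 1 + t < ‖a ω‖}),
    measureReal_nonneg (μ := μ) (s := {ω | ‖a ω‖ < 1 - t})]

/-- For `a ~ N(0, (1/d) I_d)` in `ℝ^d`, `ā = a / ‖a‖`, a nonzero vector `w`,
`τ > 0` and `t ∈ (0,1)`:
`Φ(√d·τ·(1+t)/‖w‖) − 2·P(‖a‖ > 1+t) ≤ P(|⟨w, ā⟩| ≥ τ) ≤ Φ(√d·τ·(1−t)/‖w‖) + 2·P(‖a‖ < 1−t)`. -/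
theorem statement_4
    (d : ℕ) (hd : 1 ≤ d)
    (Ω : Type) [MeasurableSpace Ω] (μ : Measure Ω) [IsProbabilityMeasure μ]
    (a : Ω → EuclideanSpace ℝ (Fin d))
    (ha_meas : Measurable a)
    (ha_indep : iIndepFun (fun j ω => a ω j) μ)
    (ha_gauss : ∀ j, μ.map (fun ω => a ω j) = gaussianReal 0 ((d : ℝ≥0)⁻¹))
    (w : EuclideanSpace ℝ (Fin d)) (hw : w ≠ 0)
    (τ : ℝ) (hτ : 0 < τ) (t : ℝ) (ht0 : 0 < t) (ht1 : t < 1) :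
    Phi (Real.sqrt d * τ * (1 + t) / ‖w‖) - 2 * (μ {ω | 1 + t < ‖a ω‖}).toReal ≤
        (μ {ω | τ ≤ |⟪w, ‖a ω‖⁻¹ • a ω⟫|}).toReal ∧
      (μ {ω | τ ≤ |⟪w, ‖a ω‖⁻¹ • a ω⟫|}).toReal ≤
        Phi (Real.sqrt d * τ * (1 - t) / ‖w‖) + 2 * (μ {ω | ‖a ω‖ < 1 - t}).toReal :=
  statement_4_general d Ω μ a ha_meas ha_indep ha_gauss w hw τ hτ t ht0 ht1
end

section
/- Let N ≥ 1 and let M ∈ ℝ^{N×N} be a symmetric matrix whose diagonal entries are all equal to c ∈ ℝ. Let ξ₁, …, ξ_N be i.i.d. Bernoulli(1/2) random variables and let S := {i : ξ_i = 1}. Then λ_max(M) ≤ c + 4·E[ ‖M_{S,Sᶜ}‖_op ], where M_{S,Sᶜ} denotes the submatrix of M with rows indexed by S and columns indexed by Sᶜ, ‖·‖_op denotes the operator (spectral) norm, with the convention that the norm is 0 when S or Sᶜ is empty, and λ_max(M) is the largest eigenvalue of M. -/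
open MeasureTheory ProbabilityTheory
open scoped RealInnerProductSpace Matrix

/-!
Let `v` be a unit eigenvector for `λ_max(M)`. For `i ≠ j` the event `i ∈ S, j ∉ S` has
probability `1/4`, so `E[M_{S,Sᶜ}] = (M - c·1)/4` entrywise and
`λ_max(M) = ⟪v, M v⟫ = c + 4·E⟪v, M_{S,Sᶜ} v⟫ ≤ c + 4·E‖M_{S,Sᶜ}‖_op`.
-/

namespace Matrix

variable {ι : Type*} [Fintype ι]

/-- `M_{S,Sᶜ}` for `S = {i | b i = true}`, padded with zeros to a square matrix. -/
def crossBlock (M : Matrix ι ι ℝ) (b : ι → Bool) : Matrix ι ι ℝ :=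
  of fun i j => if b i = true ∧ b j = false then M i j else 0

lemma integral_dotProduct_mulVec {Ω : Type*} [MeasurableSpace Ω] {μ : Measure Ω}
    (A : Ω → Matrix ι ι ℝ) (hA : ∀ i j, Integrable (fun ω => A ω i j) μ) (v w : ι → ℝ) :
    ∫ ω, v ⬝ᵥ A ω *ᵥ w ∂μ = v ⬝ᵥ (of fun i j => ∫ ω, A ω i j ∂μ) *ᵥ w := by
  simp only [dotProduct, mulVec, of_apply]
  rw [integral_finsetSum _ fun i _ =>
    (integrable_finsetSum _ fun j _ => (hA i j).mul_const _).const_mul _]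
  refine Finset.sum_congr rfl fun i _ => ?_
  rw [integral_const_mul, integral_finsetSum _ fun j _ => (hA i j).mul_const _]
  simp only [integral_mul_const]

lemma eq_dotProduct_mulVec_of_toEuclideanLin_eq_smul [DecidableEq ι] (M : Matrix ι ι ℝ)
    {v : EuclideanSpace ℝ ι} (hv : ‖v‖ = 1) {a : ℝ} (h : toEuclideanLin M v = a • v) :
    a = v ⬝ᵥ M *ᵥ v := by
  have hMv : toEuclideanCLM (𝕜 := ℝ) M v = a • v := h
  rw [← inner_toEuclideanCLM, hMv, real_inner_smul_right, real_inner_self_eq_norm_sq, hv,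
    one_pow, mul_one]

end Matrix

lemma real_inner_self_apply_le_opNorm {E : Type*} [NormedAddCommGroup E] [InnerProductSpace ℝ E]
    (T : E →L[ℝ] E) {v : E} (hv : ‖v‖ = 1) : ⟪v, T v⟫ ≤ ‖T‖ :=
  calc ⟪v, T v⟫ ≤ ‖v‖ * ‖T v‖ := real_inner_le_norm _ _
    _ ≤ ‖v‖ * (‖T‖ * ‖v‖) := by gcongr; exact T.le_opNorm v
    _ = ‖T‖ := by rw [hv, one_mul, mul_one]

section Bernoulli

variable {Ω ι : Type*} [MeasurableSpace Ω] {μ : Measure Ω} [IsProbabilityMeasure μ]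
  {ξ : ι → Ω → Bool}

lemma measureReal_true_and_false (hmeas : ∀ i, Measurable (ξ i)) (hindep : iIndepFun ξ μ)
    (hber : ∀ i, μ {ω | ξ i ω = true} = 1 / 2) {i j : ι} (hij : i ≠ j) :
    μ.real {ω | ξ i ω = true ∧ ξ j ω = false} = 1 / 4 := by
  have htrue : ∀ k, μ.real (ξ k ⁻¹' {true}) = 1 / 2 := fun k => by
    simp [measureReal_def, Set.preimage, hber k]
  have hfalse : μ.real (ξ j ⁻¹' {false}) = 1 / 2 := by
    have : ξ j ⁻¹' {false} = (ξ j ⁻¹' {true})ᶜ := by ext; simp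
    rw [this, probReal_compl_eq_one_sub (hmeas j (measurableSet_singleton _)), htrue]
    norm_num
  have hind := (hindep.indepFun hij).measure_inter_preimage_eq_mul {true} {false}
    (measurableSet_singleton _) (measurableSet_singleton _)
  calc μ.real {ω | ξ i ω = true ∧ ξ j ω = false}
      = μ.real (ξ i ⁻¹' {true} ∩ ξ j ⁻¹' {false}) := rfl
    _ = μ.real (ξ i ⁻¹' {true}) * μ.real (ξ j ⁻¹' {false}) := by
      simp only [measureReal_def, hind, ENNReal.toReal_mul]
    _ = 1 / 4 := by rw [htrue, hfalse]; norm_num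

lemma integral_crossBlock_apply [DecidableEq ι] (hmeas : ∀ i, Measurable (ξ i))
    (hindep : iIndepFun ξ μ) (hber : ∀ i, μ {ω | ξ i ω = true} = 1 / 2)
    (M : Matrix ι ι ℝ) (i j : ι) :
    ∫ ω, M.crossBlock (fun k => ξ k ω) i j ∂μ = (if i = j then 0 else M i j) / 4 := by
  have hS : MeasurableSet {ω | ξ i ω = true ∧ ξ j ω = false} :=
    (hmeas i (measurableSet_singleton _)).inter (hmeas j (measurableSet_singleton _))
  have hind : (fun ω => M.crossBlock (fun k => ξ k ω) i j)
      = {ω | ξ i ω = true ∧ ξ j ω = false}.indicator fun _ => M i j := by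
    ext ω
    simp [Matrix.crossBlock, Set.indicator]
  rw [hind, integral_indicator_const _ hS]
  split_ifs with hij
  · subst hij
    simp
  · rw [measureReal_true_and_false hmeas hindep hber hij, smul_eq_mul]
    ring

lemma eq_smul_one_add_four_smul_integral_crossBlock (hmeas : ∀ i, Measurable (ξ i))
    (hindep : iIndepFun ξ μ) (hber : ∀ i, μ {ω | ξ i ω = true} = 1 / 2) [Fintype ι]
    [DecidableEq ι] {M : Matrix ι ι ℝ} {c : ℝ} (hdiag : ∀ i, M i i = c) :
    M = c • 1 + (4 : ℝ) • Matrix.of fun i j => ∫ ω, M.crossBlock (fun k => ξ k ω) i j ∂μ := by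
  ext i j
  simp only [integral_crossBlock_apply hmeas hindep hber]
  by_cases hij : i = j <;> simp [hij, hdiag, mul_div_cancel₀]

end Bernoulli

/-- decoupling: Let `M ∈ ℝ^{N×N}` be symmetric with all diagonal entries equal
to `c`, let `ξ₁, …, ξ_N` be i.i.d. Bernoulli(1/2) and `S = {i : ξᵢ = 1}`.  Then
`λ_max(M) ≤ c + 4·E‖M_{S,Sᶜ}‖_op`, where the submatrix norm is realized as the operator norm
of the matrix keeping entries with row in `S` and column in `Sᶜ` and zeroing all others
(this equals the operator norm of the rectangular submatrix, with the convention that it is `0`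
when `S` or `Sᶜ` is empty).  `λ_max(M)` is encoded by an orthonormal eigenbasis `B` and an
antitone eigenvalue sequence `ev`, so that `λ_max(M) = ev 0`. -/
theorem statement_9
    (N : ℕ) (hN : 1 ≤ N)
    (M : Matrix (Fin N) (Fin N) ℝ)
    (c : ℝ) (hdiag : ∀ i, M i i = c)
    (Ω : Type) [MeasurableSpace Ω] (μ : Measure Ω) [IsProbabilityMeasure μ]
    (ξ : Fin N → Ω → Bool)
    (hmeas : ∀ i, Measurable (ξ i))
    (hindep : iIndepFun ξ μ)
    (hber : ∀ i, μ {ω | ξ i ω = true} = 1 / 2)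
    (ev : Fin N → ℝ) (B : Fin N → EuclideanSpace ℝ (Fin N))
    (hB : Orthonormal ℝ B)
    (heig : ∀ i, Matrix.toEuclideanLin M (B i) = ev i • B i) :
    ev ⟨0, by omega⟩ ≤ c + 4 * ∫ ω, ‖Matrix.toEuclideanCLM (𝕜 := ℝ)
      (Matrix.of fun i j => if ξ i ω = true ∧ ξ j ω = false then M i j else 0)‖ ∂μ := by
  set v := B ⟨0, by omega⟩
  have hv : ‖v‖ = 1 := hB.1 _
  have hvv : v ⬝ᵥ v = 1 := by
    have := real_inner_self_eq_norm_sq v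
    rw [hv, EuclideanSpace.inner_eq_star_dotProduct] at this
    simpa using this
  set A : Ω → Matrix (Fin N) (Fin N) ℝ := fun ω => M.crossBlock (fun k => ξ k ω)
  have hA : ∀ f : Matrix (Fin N) (Fin N) ℝ → ℝ, Integrable (fun ω => f (A ω)) μ := fun f =>
    (Integrable.of_finite (f := fun b => f (M.crossBlock b))).comp_measurable
      (measurable_pi_lambda _ hmeas)
  calc ev ⟨0, by omega⟩ = v ⬝ᵥ M *ᵥ v :=
        M.eq_dotProduct_mulVec_of_toEuclideanLin_eq_smul hv (heig _)
    _ = c * (v ⬝ᵥ v) + 4 * (v ⬝ᵥ (Matrix.of fun i j => ∫ ω, A ω i j ∂μ) *ᵥ v) := by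
        conv_lhs => rw [eq_smul_one_add_four_smul_integral_crossBlock hmeas hindep hber hdiag]
        simp only [Matrix.add_mulVec, Matrix.smul_mulVec, Matrix.one_mulVec, dotProduct_add,
          dotProduct_smul, smul_eq_mul, A]
    _ = c + 4 * ∫ ω, ⟪v, Matrix.toEuclideanCLM (𝕜 := ℝ) (A ω) v⟫ ∂μ := by
        simp only [Matrix.inner_toEuclideanCLM, hvv, mul_one,
          Matrix.integral_dotProduct_mulVec A fun i j => hA (· i j)]
    _ ≤ c + 4 * ∫ ω, ‖Matrix.toEuclideanCLM (𝕜 := ℝ) (A ω)‖ ∂μ := by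
        gcongr c + 4 * ?_
        exact integral_mono (hA fun X => ⟪v, Matrix.toEuclideanCLM (𝕜 := ℝ) X v⟫)
          (hA fun X => ‖Matrix.toEuclideanCLM (𝕜 := ℝ) X‖)
          fun ω => real_inner_self_apply_le_opNorm _ hv
end

section
/- Let d ≥ 1, let a ~ N(0, (1/d)I_d) be a Gaussian random vector in ℝ^d with coordinates a₁, …, a_d, and let 0 ≤ λ₁, …, λ_d ≤ 1. Then for every t > 0, P( |Σ_i λ_i²·a_i² − (Σ_i λ_i²)/d| > 2t·√((Σ_i λ_i²)/d) + t² + 4/d ) < 2·e^{−d·t²/2}. -/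
open MeasureTheory ProbabilityTheory Real
open scoped RealInnerProductSpace ENNReal NNReal

/-! For `g ~ N(0, v)` one has `E exp(c g²) = (1 - 2vc)^{-1/2}`, and
`(1 - 2y)^{-1/2} ≤ exp(y + 2y²/(1 - 2r))` whenever `|y| ≤ r < 1/2`. Hence, for independent
`gᵢ ~ N(0, v)` and weights `|cᵢ| ≤ b`, both `Σ cᵢ gᵢ² - v Σ cᵢ` and its negative have
moment generating function at most `exp(2 (s v)² Σ cᵢ² / (1 - 2 s v b))` (a sub-gamma bound).
With `v = 1/d`, `cᵢ = λᵢ²`, `σ = √(Σ λᵢ²/d)` and the Chernoff parameter `s = d t / (2 (σ + t))`,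
each tail beyond `2tσ + t²` has probability below `exp(-d t²/2)`. -/

lemma inv_sqrt_one_sub_two_mul_le_exp {y r : ℝ} (hy : |y| ≤ r) (hr : 2 * r < 1) :
    (√(1 - 2 * y))⁻¹ ≤ exp (y + 2 * y ^ 2 / (1 - 2 * r)) := by
  have hz : 0 < 1 - 2 * y := by linarith [le_abs_self y]
  rw [← exp_log (inv_pos.2 (sqrt_pos.2 hz)), log_inv, log_sqrt hz.le, exp_le_exp]
  have hlog : -log (1 - 2 * y) ≤ (1 - 2 * y)⁻¹ - 1 := by
    rw [← log_inv]; exact log_le_sub_one_of_pos (inv_pos.2 hz)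
  have hsplit : (1 - 2 * y)⁻¹ - 1 = 2 * (y + 2 * y ^ 2 / (1 - 2 * y)) := by
    field_simp; ring
  have hden : 2 * y ^ 2 / (1 - 2 * y) ≤ 2 * y ^ 2 / (1 - 2 * r) :=
    div_le_div_of_nonneg_left (by positivity) (by linarith) (by linarith [le_abs_self y])
  linarith

-- The Chernoff parameter `s` is the one for which `1 - 2 s v = σ / (σ + t)`.
lemma sub_gamma_exponent_lt {v σ t u s : ℝ} (hv : 0 < v) (hσ : 0 < σ) (ht : 0 < t)
    (hu : 2 * t * σ + t ^ 2 < u) (hs : s = t / (2 * v * (σ + t))) :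
    -s * u + 2 * (s * v) ^ 2 / (1 - 2 * s * v) * (σ ^ 2 / v) < -(t ^ 2 / (2 * v)) := by
  have hσt : 0 < σ + t := by linarith
  have hs0 : 0 < s := hs ▸ by positivity
  have hquad : 2 * (s * v) ^ 2 / (1 - 2 * s * v) * (σ ^ 2 / v) =
      t ^ 2 * σ / (2 * v * (σ + t)) := by
    have hden : 1 - 2 * s * v = σ / (σ + t) := by rw [hs]; field_simp; ring
    rw [hden, hs]; field_simp
  have hlin : -s * (2 * t * σ + t ^ 2) + t ^ 2 * σ / (2 * v * (σ + t)) = -(t ^ 2 / (2 * v)) := by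
    rw [hs]; field_simp; ring
  nlinarith [mul_lt_mul_of_pos_left hu hs0]

namespace ProbabilityTheory

lemma gaussianPDFReal_zero_mul_exp_mul_sq {v : ℝ≥0} (hv : v ≠ 0) (c x : ℝ) :
    gaussianPDFReal 0 v x * exp (c * x ^ 2) =
      (√(2 * π * v))⁻¹ * exp (-((1 - 2 * v * c) / (2 * v)) * x ^ 2) := by
  have : (v : ℝ) ≠ 0 := by exact_mod_cast hv
  rw [gaussianPDFReal, mul_assoc, ← exp_add]
  congr 2
  field_simp
  ring

lemma mgf_sq_gaussianReal {v : ℝ≥0} {c : ℝ} (hc : 2 * v * c < 1) :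
    mgf (fun x => x ^ 2) (gaussianReal 0 v) c = (√(1 - 2 * v * c))⁻¹ := by
  rcases eq_or_ne v 0 with rfl | hv
  · simp [mgf]
  have hv' : (0 : ℝ) < v := by positivity
  rw [mgf, integral_gaussianReal_eq_integral_smul hv]
  simp_rw [smul_eq_mul, gaussianPDFReal_zero_mul_exp_mul_sq hv]
  rw [integral_const_mul, integral_gaussian, ← sqrt_inv, ← sqrt_mul (by positivity), ← sqrt_inv]
  congr 1
  field_simp

variable {Ω ι : Type*} [MeasurableSpace Ω] {μ : Measure Ω}

lemma mgf_sq_of_map_eq_gaussianReal {X : Ω → ℝ} {v : ℝ≥0} (hX : μ.map X = gaussianReal 0 v)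
    {c : ℝ} (hc : 2 * v * c < 1) :
    mgf (fun ω => X ω ^ 2) μ c = (√(1 - 2 * v * c))⁻¹ := by
  have hX_meas : AEMeasurable X μ := .of_map_ne_zero (hX ▸ IsProbabilityMeasure.ne_zero _)
  rw [← mgf_sq_gaussianReal hc, ← hX, mgf_map hX_meas (by fun_prop)]
  rfl

variable [Fintype ι] {X : ι → Ω → ℝ} {v : ℝ≥0}

lemma mgf_sum_mul_sq_of_map_eq_gaussianReal (hindep : iIndepFun X μ)
    (hX : ∀ i, μ.map (X i) = gaussianReal 0 v) (c : ι → ℝ) {s : ℝ}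
    (hc : ∀ i, 2 * v * (s * c i) < 1) :
    mgf (fun ω => ∑ i, c i * X i ω ^ 2) μ s = ∏ i, (√(1 - 2 * v * (s * c i)))⁻¹ := by
  have hsum : (fun ω => ∑ i, c i * X i ω ^ 2) = ∑ i, (fun x => c i * x ^ 2) ∘ X i := by
    ext ω; simp
  have hX_meas i : AEMeasurable (X i) μ := .of_map_ne_zero ((hX i) ▸ IsProbabilityMeasure.ne_zero _)
  rw [hsum, (hindep.comp _ fun i => by fun_prop).mgf_sum₀ (fun i => by fun_prop)]
  refine Finset.prod_congr rfl fun i _ => ?_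
  rw [Function.comp_def, mgf_const_mul, mul_comm, mgf_sq_of_map_eq_gaussianReal (hX i) (hc i)]

lemma measureReal_sum_mul_sq_ge_le (hindep : iIndepFun X μ)
    (hX : ∀ i, μ.map (X i) = gaussianReal 0 v) {c : ι → ℝ} {b s : ℝ} (hc : ∀ i, |c i| ≤ b)
    (hs : 0 ≤ s) (hsb : 2 * s * v * b < 1) (u : ℝ) :
    μ.real {ω | v * ∑ i, c i + u ≤ ∑ i, c i * X i ω ^ 2} ≤
      exp (-s * u + 2 * (s * v) ^ 2 / (1 - 2 * s * v * b) * ∑ i, c i ^ 2) := by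
  have := hindep.isProbabilityMeasure
  have hy i : |s * v * c i| ≤ s * v * b := by
    rw [abs_mul, abs_of_nonneg (by positivity)]; gcongr; exact hc i
  have hmgf := mgf_sum_mul_sq_of_map_eq_gaussianReal hindep hX c (s := s) fun i => by
    linarith [le_abs_self (s * v * c i), hy i]
  have hint : Integrable (fun ω => exp (s * ∑ i, c i * X i ω ^ 2)) μ :=
    mgf_pos_iff.1 (hmgf ▸ Finset.prod_pos fun i _ => inv_pos.2 (sqrt_pos.2 (by
      linarith [le_abs_self (s * v * c i), hy i])))
  calc μ.real {ω | v * ∑ i, c i + u ≤ ∑ i, c i * X i ω ^ 2}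
      ≤ exp (-s * (v * ∑ i, c i + u)) * mgf (fun ω => ∑ i, c i * X i ω ^ 2) μ s :=
        measure_ge_le_exp_mul_mgf _ hs hint
    _ ≤ exp (-s * (v * ∑ i, c i + u)) *
          ∏ i, exp (s * v * c i + 2 * (s * v) ^ 2 / (1 - 2 * s * v * b) * c i ^ 2) := by
        rw [hmgf]
        gcongr with i
        have := inv_sqrt_one_sub_two_mul_le_exp (hy i) (by linarith)
        ring_nf at this ⊢
        exact this
    _ = exp (-s * u + 2 * (s * v) ^ 2 / (1 - 2 * s * v * b) * ∑ i, c i ^ 2) := by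
        rw [← exp_sum, ← exp_add, Finset.sum_add_distrib, ← Finset.mul_sum, ← Finset.mul_sum]
        ring_nf

lemma measureReal_abs_sum_mul_sq_sub_ge_le (hindep : iIndepFun X μ)
    (hX : ∀ i, μ.map (X i) = gaussianReal 0 v) {c : ι → ℝ} {b s : ℝ} (hc : ∀ i, |c i| ≤ b)
    (hs : 0 ≤ s) (hsb : 2 * s * v * b < 1) (u : ℝ) :
    μ.real {ω | u ≤ |∑ i, c i * X i ω ^ 2 - v * ∑ i, c i|} ≤
      2 * exp (-s * u + 2 * (s * v) ^ 2 / (1 - 2 * s * v * b) * ∑ i, c i ^ 2) := by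
  have := hindep.isProbabilityMeasure
  have upper := measureReal_sum_mul_sq_ge_le hindep hX hc hs hsb u
  have lower := measureReal_sum_mul_sq_ge_le hindep hX (c := fun i => -c i)
    (fun i => (abs_neg (c i)).trans_le (hc i)) hs hsb u
  simp only [neg_sq, neg_mul, Finset.sum_neg_distrib] at lower
  calc μ.real {ω | u ≤ |∑ i, c i * X i ω ^ 2 - v * ∑ i, c i|}
      ≤ μ.real ({ω | v * ∑ i, c i + u ≤ ∑ i, c i * X i ω ^ 2} ∪
          {ω | v * -∑ i, c i + u ≤ -∑ i, c i * X i ω ^ 2}) := by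
        refine measureReal_mono fun ω hω => ?_
        simp only [Set.mem_ofPred_eq, Set.mem_union] at hω ⊢
        rcases le_abs.1 hω with h | h
        exacts [.inl (by linarith), .inr (by linarith)]
    _ ≤ _ := measureReal_union_le _ _
    _ ≤ _ := by simp only [neg_mul] at upper ⊢; linarith

lemma measureReal_abs_sum_mul_sq_sub_gt_lt (hindep : iIndepFun X μ)
    (hX : ∀ i, μ.map (X i) = gaussianReal 0 v) (hv : v ≠ 0) {c : ι → ℝ} (hc0 : ∀ i, 0 ≤ c i)
    (hc1 : ∀ i, c i ≤ 1) {t u : ℝ} (ht : 0 < t) (hu : 2 * t * √(v * ∑ i, c i) + t ^ 2 < u) :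
    μ.real {ω | u < |∑ i, c i * X i ω ^ 2 - v * ∑ i, c i|} < 2 * exp (-(t ^ 2 / (2 * v))) := by
  have := hindep.isProbabilityMeasure
  obtain hm0 | hm0 := (Finset.sum_nonneg fun i _ => hc0 i).eq_or_lt
  · have hc i : c i = 0 :=
      (Finset.sum_eq_zero_iff_of_nonneg fun i _ => hc0 i).1 hm0.symm i (Finset.mem_univ i)
    have hempty : ¬u < 0 := not_lt.2 (by nlinarith [sqrt_nonneg (v * ∑ i, c i)])
    simp only [hc, zero_mul, Finset.sum_const_zero, mul_zero, sub_zero, abs_zero, hempty,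
      Set.ofPred_false, measureReal_empty]
    positivity
  have hv0 : (0 : ℝ) < v := by positivity
  set σ := √(v * ∑ i, c i)
  have hσ : 0 < σ := sqrt_pos.2 (by positivity)
  have hsum_sq : ∑ i, c i ^ 2 ≤ σ ^ 2 / v := by
    rw [sq_sqrt (by positivity), mul_div_cancel_left₀ _ hv0.ne']
    exact Finset.sum_le_sum fun i _ => pow_le_of_le_one (hc0 i) (hc1 i) two_ne_zero
  set s := t / (2 * v * (σ + t)) with hs
  have hsb : 2 * s * v * 1 < 1 := by rw [hs]; field_simp; linarith
  calc μ.real {ω | u < |∑ i, c i * X i ω ^ 2 - v * ∑ i, c i|}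
      ≤ μ.real {ω | u ≤ |∑ i, c i * X i ω ^ 2 - v * ∑ i, c i|} :=
        measureReal_mono (Set.ofPred_subset_ofPred.2 fun _ => le_of_lt)
    _ ≤ 2 * exp (-s * u + 2 * (s * v) ^ 2 / (1 - 2 * s * v * 1) * ∑ i, c i ^ 2) :=
        measureReal_abs_sum_mul_sq_sub_ge_le hindep hX
          (fun i => (abs_of_nonneg (hc0 i)).trans_le (hc1 i)) (by positivity) hsb u
    _ ≤ 2 * exp (-s * u + 2 * (s * v) ^ 2 / (1 - 2 * s * v) * (σ ^ 2 / v)) := by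
        rw [mul_one] at hsb ⊢; gcongr
    _ < 2 * exp (-(t ^ 2 / (2 * v))) := by
        gcongr; exact sub_gamma_exponent_lt hv0 hσ ht hu hs

end ProbabilityTheory

theorem statement_15_general
    (d : ℕ) (hd : 1 ≤ d)
    (Ω : Type) [MeasurableSpace Ω] (μ : Measure Ω)
    (a : Ω → EuclideanSpace ℝ (Fin d))
    (ha_indep : iIndepFun (fun j ω => a ω j) μ)
    (ha_gauss : ∀ j, μ.map (fun ω => a ω j) = gaussianReal 0 ((d : ℝ≥0)⁻¹))
    (l : Fin d → ℝ) (hl0 : ∀ i, 0 ≤ l i) (hl1 : ∀ i, l i ≤ 1)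
    (t : ℝ) (ht : 0 < t) :
    (μ {ω | 2 * t * Real.sqrt ((∑ i, (l i) ^ 2) / d) + t ^ 2 + 4 / d <
        |∑ i, (l i) ^ 2 * (a ω i) ^ 2 - (∑ i, (l i) ^ 2) / d|}).toReal <
      2 * Real.exp (-(d * t ^ 2 / 2)) := by
  have hd0 : (0 : ℝ) < d := by positivity
  have tail := measureReal_abs_sum_mul_sq_sub_gt_lt ha_indep ha_gauss (by positivity)
    (c := fun i => l i ^ 2) (fun i => sq_nonneg (l i)) (fun i => pow_le_one₀ (hl0 i) (hl1 i)) ht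
    (u := 2 * t * √((∑ i, l i ^ 2) / d) + t ^ 2 + 4 / d)
    (by push_cast; rw [inv_mul_eq_div]; linarith [show (0 : ℝ) < 4 / d by positivity])
  push_cast [inv_mul_eq_div] at tail
  rw [← measureReal_def]
  convert tail using 3
  field_simp

/-- For `a ~ N(0, (1/d) I_d)` in `ℝ^d`, weights `0 ≤ λᵢ ≤ 1`, and every `t > 0`,
`P( |Σᵢ λᵢ²·aᵢ² − (Σᵢ λᵢ²)/d| > 2t·√((Σᵢ λᵢ²)/d) + t² + 4/d ) < 2·e^{−d·t²/2}`. -/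
theorem statement_15
    (d : ℕ) (hd : 1 ≤ d)
    (Ω : Type) [MeasurableSpace Ω] (μ : Measure Ω) [IsProbabilityMeasure μ]
    (a : Ω → EuclideanSpace ℝ (Fin d))
    (ha_meas : Measurable a)
    (ha_indep : iIndepFun (fun j ω => a ω j) μ)
    (ha_gauss : ∀ j, μ.map (fun ω => a ω j) = gaussianReal 0 ((d : ℝ≥0)⁻¹))
    (l : Fin d → ℝ) (hl0 : ∀ i, 0 ≤ l i) (hl1 : ∀ i, l i ≤ 1)
    (t : ℝ) (ht : 0 < t) :
    (μ {ω | 2 * t * Real.sqrt ((∑ i, (l i) ^ 2) / d) + t ^ 2 + 4 / d <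
        |∑ i, (l i) ^ 2 * (a ω i) ^ 2 - (∑ i, (l i) ^ 2) / d|}).toReal <
      2 * Real.exp (-(d * t ^ 2 / 2)) :=
  statement_15_general d hd Ω μ a ha_indep ha_gauss l hl0 hl1 t ht
end

section
/- Let d ≥ 1, let a ~ N(0, (1/d)I_d) be a Gaussian random vector in ℝ^d with coordinates a₁, …, a_d, and let 0 ≤ λ₁, …, λ_d ≤ 1. Then ( E[ √(Σ_i λ_i²·a_i²) ] )² ≥ (Σ_i λ_i² − 4)/d. In particular (taking all λ_i = 1), (E‖a‖)² ≥ (d − 4)/d. -/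
/-!
Write `Y = ∑ cᵢ aᵢ²` with `cᵢ = λᵢ²` and `m = E Y = (∑ cᵢ) / d`. Since `(√y - √m)² ≤ (y - m)² / m`
for `y ≥ 0`, we get `Var √Y ≤ E (√Y - √m)² ≤ Var Y / m`, hence
`(E √Y)² = E Y - Var √Y ≥ m - Var Y / m`. For independent centred Gaussians of variance `v = 1/d`,
`Var (aᵢ²) = 3v² - v² = 2v²`, so `Var Y = 2v² ∑ cᵢ² ≤ 2v m` because `0 ≤ cᵢ ≤ 1`. Therefore
`(E √Y)² ≥ m - 2v = (∑ cᵢ - 2) / d`. The fourth moment comes from the Gamma-function integral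
`∫ x²ⁿ e^{-b x²} dx = b^{-(n + 1/2)} Γ(n + 1/2)`.
-/

open MeasureTheory ProbabilityTheory Real
open scoped NNReal Nat

theorem integral_even_pow_mul_exp_neg_mul_sq {b : ℝ} (hb : 0 < b) (n : ℕ) :
    ∫ x : ℝ, x ^ (2 * n) * rexp (-b * x ^ 2) = b ^ (-(n + 1 / 2 : ℝ)) * Gamma (n + 1 / 2) := by
  have h := integral_rpow_mul_exp_neg_mul_rpow (p := 2) (q := ((2 * n : ℕ) : ℝ)) two_pos
    (by linarith [Nat.cast_nonneg (α := ℝ) (2 * n)]) hb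
  have heven : (fun x : ℝ => x ^ (2 * n) * rexp (-b * x ^ 2))
      = fun x => |x| ^ (2 * n) * rexp (-b * |x| ^ 2) := by
    simp only [pow_mul, sq_abs]
  rw [heven, integral_comp_abs (f := fun x : ℝ => x ^ (2 * n) * rexp (-b * x ^ 2))]
  simp only [Real.rpow_natCast, Real.rpow_two] at h
  rw [h]
  push_cast
  ring_nf

theorem integral_even_pow_gaussianReal (v : ℝ≥0) (n : ℕ) :
    ∫ x, x ^ (2 * n) ∂gaussianReal 0 v = (v : ℝ) ^ n * (2 * n - 1 : ℕ)‼ := by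
  rcases eq_or_ne v 0 with rfl | hv
  · rcases n with _ | n <;> simp [gaussianReal_zero_var]
  have hpdf : ∀ x, gaussianPDFReal 0 v x • x ^ (2 * n)
      = (√(2 * π * v))⁻¹ * (x ^ (2 * n) * rexp (-(2 * v : ℝ)⁻¹ * x ^ 2)) := fun x => by
    rw [gaussianPDFReal, smul_eq_mul, sub_zero, neg_div, div_eq_inv_mul, neg_mul]
    ring
  have hsqrt : √(2 * π * v) = √π * (2 * v : ℝ) ^ (1 / 2 : ℝ) := by
    rw [show 2 * π * v = π * (2 * v) by ring, sqrt_mul pi_pos.le, sqrt_eq_rpow (2 * v)]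
  rw [integral_gaussianReal_eq_integral_smul hv, integral_congr_ae (ae_of_all _ hpdf),
    integral_const_mul, integral_even_pow_mul_exp_neg_mul_sq (by positivity),
    Gamma_nat_add_half, inv_rpow (by positivity), ← rpow_neg (by positivity), neg_neg,
    rpow_add (by positivity), rpow_natCast, hsqrt]
  field_simp
  ring

section GaussianSquares

variable {Ω : Type*} [MeasurableSpace Ω] {μ : Measure Ω} {X : Ω → ℝ} {v : ℝ≥0}

lemma aemeasurable_of_map_eq_gaussianReal {m : ℝ} (hX : μ.map X = gaussianReal m v) :
    AEMeasurable X μ :=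
  aemeasurable_of_map_neZero (by rw [hX]; infer_instance)

lemma integral_even_pow_of_map_eq_gaussianReal (hX : μ.map X = gaussianReal 0 v) (n : ℕ) :
    ∫ ω, X ω ^ (2 * n) ∂μ = (v : ℝ) ^ n * (2 * n - 1 : ℕ)‼ := by
  rw [← integral_even_pow_gaussianReal, ← hX,
    integral_map (aemeasurable_of_map_eq_gaussianReal hX) (by fun_prop)]

variable [IsProbabilityMeasure μ]

lemma memLp_sq_of_map_eq_gaussianReal (hX : μ.map X = gaussianReal 0 v) :
    MemLp (fun ω => X ω ^ 2) 2 μ := by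
  have hXm := aemeasurable_of_map_eq_gaussianReal hX
  have h4 : MemLp X 4 μ := (hX ▸ memLp_id_gaussianReal 4 : MemLp id 4 (μ.map X)).comp_of_map hXm
  rw [memLp_two_iff_integrable_sq (hXm.pow_const 2).aestronglyMeasurable]
  convert h4.integrable_norm_pow' (p := 4) using 2 with ω
  rw [Real.norm_eq_abs, ← pow_mul, Even.pow_abs ⟨2, rfl⟩]

lemma variance_sq_of_map_eq_gaussianReal (hX : μ.map X = gaussianReal 0 v) :
    Var[fun ω => X ω ^ 2; μ] = 2 * (v : ℝ) ^ 2 := by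
  have h2 := integral_even_pow_of_map_eq_gaussianReal hX 1
  have h4 := integral_even_pow_of_map_eq_gaussianReal hX 2
  rw [variance_eq_sub (memLp_sq_of_map_eq_gaussianReal hX)]
  simp only [Pi.pow_apply, ← pow_mul]
  rw [h2, h4]
  norm_num [Nat.doubleFactorial]
  ring

end GaussianSquares

section WeightedSumOfSquares

variable {Ω ι : Type*} [MeasurableSpace Ω] {μ : Measure Ω} [IsProbabilityMeasure μ] [Fintype ι]
  {X : ι → Ω → ℝ} {v : ℝ≥0}

lemma integral_sum_mul_sq_of_map_eq_gaussianReal (hX : ∀ i, μ.map (X i) = gaussianReal 0 v)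
    (c : ι → ℝ) : ∫ ω, ∑ i, c i * X i ω ^ 2 ∂μ = v * ∑ i, c i := by
  rw [integral_finsetSum _ fun i _ => ((memLp_sq_of_map_eq_gaussianReal (hX i)).integrable
    one_le_two).const_mul (c i), Finset.mul_sum]
  refine Finset.sum_congr rfl fun i _ => ?_
  rw [integral_const_mul, integral_even_pow_of_map_eq_gaussianReal (hX i) 1]
  simp [mul_comm]

lemma variance_sum_mul_sq_of_map_eq_gaussianReal
    (hindep : Pairwise fun i j => X i ⟂ᵢ[μ] X j) (hX : ∀ i, μ.map (X i) = gaussianReal 0 v)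
    (c : ι → ℝ) : Var[fun ω => ∑ i, c i * X i ω ^ 2; μ] = 2 * v ^ 2 * ∑ i, c i ^ 2 := by
  have hmem i : MemLp (fun ω => c i * X i ω ^ 2) 2 μ :=
    (memLp_sq_of_map_eq_gaussianReal (hX i)).const_mul (c i)
  have hsum := IndepFun.variance_sum (s := Finset.univ) (fun i _ => hmem i)
    fun i _ j _ hij => (hindep hij).comp (measurable_const.mul (measurable_id.pow_const 2))
      (measurable_const.mul (measurable_id.pow_const 2))
  rw [Finset.sum_fn] at hsum
  rw [hsum, Finset.mul_sum]
  refine Finset.sum_congr rfl fun i _ => ?_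
  rw [variance_const_mul, variance_sq_of_map_eq_gaussianReal (hX i)]
  ring

end WeightedSumOfSquares

lemma sq_sqrt_sub_sqrt_le {y m : ℝ} (hy : 0 ≤ y) (hm : 0 < m) :
    (√y - √m) ^ 2 ≤ (y - m) ^ 2 / m := by
  have hmul : (y - m) ^ 2 = (√y - √m) ^ 2 * (√y + √m) ^ 2 := by
    rw [← mul_pow, mul_comm (√y - √m), ← sq_sub_sq, sq_sqrt hy, sq_sqrt hm.le]
  have hsum : m ≤ (√y + √m) ^ 2 := by
    nlinarith [sqrt_nonneg y, sq_sqrt hm.le, sqrt_nonneg m]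
  rw [le_div_iff₀ hm, hmul]
  exact mul_le_mul_of_nonneg_left hsum (sq_nonneg _)

section SqrtOfSquareIntegrable

variable {Ω : Type*} [MeasurableSpace Ω] {μ : Measure Ω} {Y : Ω → ℝ}

lemma memLp_two_sqrt (hY : Integrable Y μ) (hY0 : 0 ≤ᵐ[μ] Y) :
    MemLp (fun ω => √(Y ω)) 2 μ :=
  (memLp_two_iff_integrable_sq hY.1.aemeasurable.sqrt.aestronglyMeasurable).2
    (hY.congr (hY0.mono fun _ h => (sq_sqrt h).symm))

variable [IsProbabilityMeasure μ]

theorem integral_sub_variance_div_le_sq_integral_sqrt (hY : MemLp Y 2 μ) (hY0 : 0 ≤ᵐ[μ] Y) :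
    μ[Y] - Var[Y; μ] / μ[Y] ≤ (∫ ω, √(Y ω) ∂μ) ^ 2 := by
  set m := μ[Y]
  rcases (show 0 ≤ m from integral_nonneg_of_ae hY0).eq_or_lt with hm | hm
  · rw [← hm, div_zero, sub_zero]
    positivity
  have hYint := hY.integrable one_le_two
  have hsqrt := memLp_two_sqrt hYint hY0
  have hvar_sqrt : Var[fun ω => √(Y ω); μ] = m - (∫ ω, √(Y ω) ∂μ) ^ 2 := by
    rw [variance_eq_sub hsqrt]
    congr 1
    exact integral_congr_ae (hY0.mono fun _ h => sq_sqrt h)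
  have hvar_Y : Var[Y; μ] / m = ∫ ω, (Y ω - m) ^ 2 / m ∂μ := by
    rw [integral_div, variance_eq_integral hY.aemeasurable]
  have hle : Var[fun ω => √(Y ω); μ] ≤ Var[Y; μ] / m :=
    calc Var[fun ω => √(Y ω); μ] = Var[fun ω => √(Y ω) - √m; μ] :=
          (variance_sub_const hsqrt.1 _).symm
      _ ≤ ∫ ω, (√(Y ω) - √m) ^ 2 ∂μ := variance_le_expectation_sq (by fun_prop)
      _ ≤ ∫ ω, (Y ω - m) ^ 2 / m ∂μ :=
          integral_mono_ae ((hsqrt.sub (memLp_const _)).integrable_sq)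
            (((hY.sub (memLp_const m)).integrable_sq).div_const m)
            (hY0.mono fun _ h => sq_sqrt_sub_sqrt_le h hm)
      _ = Var[Y; μ] / m := hvar_Y.symm
  linarith

end SqrtOfSquareIntegrable

theorem mul_sum_sub_two_le_sq_integral_sqrt_sum_mul_sq {Ω ι : Type*} [MeasurableSpace Ω]
    {μ : Measure Ω} [IsProbabilityMeasure μ] [Fintype ι] {X : ι → Ω → ℝ} {v : ℝ≥0}
    (hindep : Pairwise fun i j => X i ⟂ᵢ[μ] X j) (hX : ∀ i, μ.map (X i) = gaussianReal 0 v)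
    {c : ι → ℝ} (hc0 : ∀ i, 0 ≤ c i) (hc1 : ∀ i, c i ≤ 1) :
    v * (∑ i, c i - 2) ≤ (∫ ω, √(∑ i, c i * X i ω ^ 2) ∂μ) ^ 2 := by
  have hmem : MemLp (fun ω => ∑ i, c i * X i ω ^ 2) 2 μ :=
    memLp_finsetSum _ fun i _ => (memLp_sq_of_map_eq_gaussianReal (hX i)).const_mul (c i)
  have hnonneg : 0 ≤ᵐ[μ] fun ω => ∑ i, c i * X i ω ^ 2 :=
    ae_of_all _ fun ω => Finset.sum_nonneg fun i _ => mul_nonneg (hc0 i) (sq_nonneg _)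
  have hvar : Var[fun ω => ∑ i, c i * X i ω ^ 2; μ] ≤ 2 * v * (v * ∑ i, c i) := by
    rw [variance_sum_mul_sq_of_map_eq_gaussianReal hindep hX]
    have : ∑ i, c i ^ 2 ≤ ∑ i, c i :=
      Finset.sum_le_sum fun i _ => pow_le_of_le_one (hc0 i) (hc1 i) two_ne_zero
    nlinarith [sq_nonneg (v : ℝ)]
  have key := integral_sub_variance_div_le_sq_integral_sqrt hmem hnonneg
  rw [integral_sum_mul_sq_of_map_eq_gaussianReal hX] at key
  have : Var[fun ω => ∑ i, c i * X i ω ^ 2; μ] / (v * ∑ i, c i) ≤ 2 * v :=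
    div_le_of_le_mul₀ (mul_nonneg v.2 (Finset.sum_nonneg fun i _ => hc0 i)) (by positivity) hvar
  linarith

theorem statement_16_general
    (d : ℕ)
    (Ω : Type) [MeasurableSpace Ω] (μ : Measure Ω) [IsProbabilityMeasure μ]
    (a : Ω → EuclideanSpace ℝ (Fin d))
    (ha_indep : iIndepFun (fun j ω => a ω j) μ)
    (ha_gauss : ∀ j, μ.map (fun ω => a ω j) = gaussianReal 0 ((d : ℝ≥0)⁻¹))
    (l : Fin d → ℝ) (hl0 : ∀ i, 0 ≤ l i) (hl1 : ∀ i, l i ≤ 1) :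
    (∫ ω, Real.sqrt (∑ i, (l i) ^ 2 * (a ω i) ^ 2) ∂μ) ^ 2 ≥ ((∑ i, (l i) ^ 2) - 4) / d ∧
      (∫ ω, ‖a ω‖ ∂μ) ^ 2 ≥ ((d : ℝ) - 4) / d := by
  have bound {c : Fin d → ℝ} (hc0 : ∀ i, 0 ≤ c i) (hc1 : ∀ i, c i ≤ 1) :
      (∑ i, c i - 4) / d ≤ (∫ ω, √(∑ i, c i * a ω i ^ 2) ∂μ) ^ 2 := by
    refine le_trans ?_ (mul_sum_sub_two_le_sq_integral_sqrt_sum_mul_sq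
      (fun i j hij => ha_indep.indepFun hij) ha_gauss hc0 hc1)
    rw [NNReal.coe_inv, NNReal.coe_natCast, div_eq_inv_mul]
    gcongr
    linarith
  refine ⟨bound (fun i => sq_nonneg (l i)) fun i => pow_le_one₀ (hl0 i) (hl1 i), ?_⟩
  have hnorm (ω : Ω) : ‖a ω‖ = √(∑ i : Fin d, 1 * a ω i ^ 2) := by
    simp [EuclideanSpace.norm_eq]
  simpa [hnorm] using bound (c := fun _ => 1) (fun _ => zero_le_one) fun _ => le_rfl

/-- For `a ~ N(0, (1/d) I_d)` in `ℝ^d` and weights `0 ≤ λᵢ ≤ 1`,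
`( E[√(Σᵢ λᵢ²·aᵢ²)] )² ≥ (Σᵢ λᵢ² − 4)/d`; in particular `(E‖a‖)² ≥ (d − 4)/d`. -/
theorem statement_16
    (d : ℕ) (hd : 1 ≤ d)
    (Ω : Type) [MeasurableSpace Ω] (μ : Measure Ω) [IsProbabilityMeasure μ]
    (a : Ω → EuclideanSpace ℝ (Fin d))
    (ha_meas : Measurable a)
    (ha_indep : iIndepFun (fun j ω => a ω j) μ)
    (ha_gauss : ∀ j, μ.map (fun ω => a ω j) = gaussianReal 0 ((d : ℝ≥0)⁻¹))
    (l : Fin d → ℝ) (hl0 : ∀ i, 0 ≤ l i) (hl1 : ∀ i, l i ≤ 1) :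
    (∫ ω, Real.sqrt (∑ i, (l i) ^ 2 * (a ω i) ^ 2) ∂μ) ^ 2 ≥ ((∑ i, (l i) ^ 2) - 4) / d ∧
      (∫ ω, ‖a ω‖ ∂μ) ^ 2 ≥ ((d : ℝ) - 4) / d :=
  statement_16_general d Ω μ a ha_indep ha_gauss l hl0 hl1
end
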